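/- Let k ≥ 2 be an integer. If τ is a symmetric polynomial matrix whose entries have total degree at most k and rot rot τ = 0, then there exists a polynomial vector field v = (v₁, v₂) with components of total degree at most k+1 such that τ = def v. -/

import Mathlib

/-!
Integrating `τ₁₁` in `x₁` and `τ₂₂` in `x₂` gives polynomials `A`, `B` with `∂₁A = τ₁₁`,
`∂₂B = τ₂₂`. The remaining defect `w = 2τ₁₂ - ∂₂A - ∂₁B` satisfies `∂₁∂₂w = -rot rot τ = 0`, so
`w = f + g` with `∂₂f = 0` and `∂₁g = 0`, and `v = (A + ∫g dx₂, B + ∫f dx₁)` works. Each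
antiderivative raises the total degree by at most one, and `f`, `g` can be chosen of degree at
most `deg w`.
-/

open MvPolynomial Matrix

/-- Real polynomials in two variables. -/
abbrev P2 := MvPolynomial (Fin 2) ℝ

/-- The matrix `curl v` of a polynomial vector field, defined row-wise:
`(curl v)_{i1} = ∂₂ vᵢ`, `(curl v)_{i2} = -∂₁ vᵢ`. -/
noncomputable def pcurl (v : Fin 2 → P2) : Matrix (Fin 2) (Fin 2) P2 :=
  Matrix.of fun i j =>
    if j = 0 then pderiv (1 : Fin 2) (v i) else -(pderiv (0 : Fin 2) (v i))

/-- `sym curl v := (curl v + (curl v)ᵀ)/2`. -/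
noncomputable def psymCurl (v : Fin 2 → P2) : Matrix (Fin 2) (Fin 2) P2 :=
  (1 / 2 : ℝ) • (pcurl v + (pcurl v)ᵀ)

/-- `div div τ := Σ_{i,j} ∂ᵢ∂ⱼ τ_{ij}`. -/
noncomputable def pdivDiv (τ : Matrix (Fin 2) (Fin 2) P2) : P2 :=
  ∑ i : Fin 2, ∑ j : Fin 2, pderiv i (pderiv j (τ i j))

/-- The matrix `x xᵀ q` with `(i,j)`-entry `Xᵢ · Xⱼ · q`. -/
noncomputable def xxT (q : P2) : Matrix (Fin 2) (Fin 2) P2 :=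
  Matrix.of fun i j => X i * X j * q

/-- The polynomial vector `x^⊥ = (X₂, -X₁)`. -/
noncomputable def xPerp : Fin 2 → P2 := ![X 1, -X 0]

/-- `rot τ`, with components `(rot τ)ᵢ = ∂₁ τ_{i2} - ∂₂ τ_{i1}`. -/
noncomputable def prot (τ : Matrix (Fin 2) (Fin 2) P2) : Fin 2 → P2 :=
  fun i => pderiv (0 : Fin 2) (τ i 1) - pderiv (1 : Fin 2) (τ i 0)

/-- The Hessian matrix `∇²q` with entries `∂ᵢ∂ⱼ q`. -/
noncomputable def phess (q : P2) : Matrix (Fin 2) (Fin 2) P2 :=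
  Matrix.of fun i j => pderiv i (pderiv j q)

/-- `sym(x^⊥ ⊗ v)`, the symmetric matrix with `(i,j)`-entry
`((x^⊥)ᵢ vⱼ + vᵢ (x^⊥)ⱼ)/2`. -/
noncomputable def symTen (v : Fin 2 → P2) : Matrix (Fin 2) (Fin 2) P2 :=
  Matrix.of fun i j => (1 / 2 : ℝ) • (xPerp i * v j + v i * xPerp j)

/-- The gradient matrix `∇v` with entries `(∇v)_{ij} = ∂ⱼ vᵢ`. -/
noncomputable def pgrad (v : Fin 2 → P2) : Matrix (Fin 2) (Fin 2) P2 :=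
  Matrix.of fun i j => pderiv j (v i)

/-- The symmetric gradient `def v := (∇v + (∇v)ᵀ)/2`. -/
noncomputable def pdef (v : Fin 2 → P2) : Matrix (Fin 2) (Fin 2) P2 :=
  (1 / 2 : ℝ) • (pgrad v + (pgrad v)ᵀ)

/-- The matrix `x^⊥ (x^⊥)ᵀ q` with `(i,j)`-entry `(x^⊥)ᵢ (x^⊥)ⱼ q`. -/
noncomputable def xPerpxPerpT (q : P2) : Matrix (Fin 2) (Fin 2) P2 :=
  Matrix.of fun i j => xPerp i * xPerp j * q

/-- `rot rot τ := ∂₁(rot τ)₂ − ∂₂(rot τ)₁`. -/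
noncomputable def protRot (τ : Matrix (Fin 2) (Fin 2) P2) : P2 :=
  pderiv (0 : Fin 2) (prot τ 1) - pderiv (1 : Fin 2) (prot τ 0)

namespace MvPolynomial

open Finsupp

variable {σ R K : Type*}

section CommSemiring

variable [CommSemiring R]

lemma sum_add_single_one (m : σ →₀ ℕ) (i : σ) :
    ((m + single i 1).sum fun _ e => e) = (m.sum fun _ e => e) + 1 :=
  show degree (m + single i 1) = degree m + 1 by simp

theorem pderiv_pderiv_comm (i j : σ) (p : MvPolynomial σ R) :
    pderiv i (pderiv j p) = pderiv j (pderiv i p) := by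
  obtain rfl | hij := eq_or_ne i j
  · rfl
  ext m
  simp only [coeff_pderiv, add_right_comm m (single i 1) (single j 1), Finsupp.add_apply,
    single_eq_of_ne hij, single_eq_of_ne hij.symm, add_zero]
  ring

theorem totalDegree_pderiv_le (i : σ) (p : MvPolynomial σ R) :
    (pderiv i p).totalDegree ≤ p.totalDegree - 1 := by
  refine Finset.sup_le fun m hm => ?_
  have hcoeff : coeff (m + single i 1) p ≠ 0 := by
    rw [mem_support_iff, coeff_pderiv] at hm
    exact left_ne_zero_of_mul hm
  have := le_totalDegree (mem_support_iff.mpr hcoeff)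
  rw [sum_add_single_one] at this
  omega

end CommSemiring

section Field

variable [Field K]

noncomputable def antideriv (i : σ) (p : MvPolynomial σ K) : MvPolynomial σ K :=
  ∑ m ∈ p.support, monomial (m + single i 1) (coeff m p / (m i + 1))

@[simp]
lemma antideriv_zero (i : σ) : antideriv i (0 : MvPolynomial σ K) = 0 := by
  simp [antideriv]

lemma coeff_add_single_antideriv (i : σ) (p : MvPolynomial σ K) (m : σ →₀ ℕ) :
    coeff (m + single i 1) (antideriv i p) = coeff m p / (m i + 1) := by
  classical
  rw [antideriv, coeff_sum, Finset.sum_eq_single m]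
  · rw [coeff_monomial, if_pos rfl]
  · intro n _ hn
    rw [coeff_monomial, if_neg (fun h => hn (add_right_cancel h))]
  · intro hm
    rw [notMem_support_iff.mp hm, zero_div, coeff_monomial, if_pos rfl]

lemma coeff_antideriv_of_eq_zero {i : σ} {m : σ →₀ ℕ} (hm : m i = 0) (p : MvPolynomial σ K) :
    coeff m (antideriv i p) = 0 := by
  classical
  refine (coeff_sum _ _ _).trans (Finset.sum_eq_zero fun n _ => ?_)
  rw [coeff_monomial, if_neg]
  rintro rfl
  simp at hm

theorem pderiv_antideriv [CharZero K] (i : σ) (p : MvPolynomial σ K) :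
    pderiv i (antideriv i p) = p := by
  ext m
  rw [coeff_pderiv, coeff_add_single_antideriv]
  exact div_mul_cancel₀ _ (Nat.cast_add_one_ne_zero (m i))

theorem pderiv_antideriv_of_ne {i j : σ} (hij : j ≠ i) (p : MvPolynomial σ K) :
    pderiv j (antideriv i p) = antideriv i (pderiv j p) := by
  ext m
  rw [coeff_pderiv]
  by_cases hm : m i = 0
  · rw [coeff_antideriv_of_eq_zero hm, coeff_antideriv_of_eq_zero, zero_mul]
    simp [hm, single_eq_of_ne hij.symm]
  obtain ⟨n, rfl⟩ : ∃ n, m = n + single i 1 :=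
    ⟨m - single i 1,
      (tsub_add_cancel_of_le (single_le_iff.mpr (Nat.one_le_iff_ne_zero.mpr hm))).symm⟩
  rw [add_right_comm, coeff_add_single_antideriv, coeff_add_single_antideriv, coeff_pderiv]
  simp only [Finsupp.add_apply, single_eq_of_ne hij, single_eq_of_ne hij.symm, add_zero]
  ring

lemma totalDegree_antideriv_le_of {i : σ} {p : MvPolynomial σ K} {n : ℕ}
    (h : ∀ m ∈ p.support, (m.sum fun _ e => e) + 1 ≤ n) : (antideriv i p).totalDegree ≤ n := by
  refine totalDegree_finsetSum_le fun m hm => (totalDegree_monomial_le _ _).trans ?_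
  exact (sum_add_single_one m i).trans_le (h m hm)

theorem totalDegree_antideriv_le (i : σ) (p : MvPolynomial σ K) :
    (antideriv i p).totalDegree ≤ p.totalDegree + 1 :=
  totalDegree_antideriv_le_of fun _ hm => Nat.add_le_add_right (le_totalDegree hm) 1

theorem totalDegree_antideriv_pderiv_le (i : σ) (p : MvPolynomial σ K) :
    (antideriv i (pderiv i p)).totalDegree ≤ p.totalDegree := by
  refine totalDegree_antideriv_le_of fun m hm => ?_
  rw [mem_support_iff, coeff_pderiv] at hm
  rw [← sum_add_single_one m i]
  exact le_totalDegree (mem_support_iff.mpr (left_ne_zero_of_mul hm))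

theorem exists_add_eq_of_pderiv_pderiv_eq_zero [CharZero K] {i j : σ} (hij : i ≠ j)
    {w : MvPolynomial σ K} (hw : pderiv i (pderiv j w) = 0) :
    ∃ f g : MvPolynomial σ K, f + g = w ∧ pderiv j f = 0 ∧ pderiv i g = 0 ∧
      f.totalDegree ≤ w.totalDegree ∧ g.totalDegree ≤ w.totalDegree := by
  -- `g` is the part of `w` involving `X j`, which is free of `X i` because `∂ᵢ∂ⱼ w = 0`.
  set g := antideriv j (pderiv j w)
  refine ⟨w - g, g, sub_add_cancel w g, ?_, ?_, ?_, totalDegree_antideriv_pderiv_le j w⟩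
  · rw [map_sub, pderiv_antideriv, sub_self]
  · rw [pderiv_antideriv_of_ne hij, hw, antideriv_zero]
  · exact (totalDegree_sub _ _).trans (max_le le_rfl (totalDegree_antideriv_pderiv_le j w))

theorem exists_pderiv_eq_of_pderiv_pderiv_eq [CharZero K] {i j : σ} (hij : i ≠ j)
    {a b c : MvPolynomial σ K} {k : ℕ} (ha : a.totalDegree ≤ k) (hb : b.totalDegree ≤ k)
    (hc : c.totalDegree ≤ k)
    (hcompat : pderiv j (pderiv j a) + pderiv i (pderiv i b) = pderiv i (pderiv j c)) :
    ∃ u₁ u₂ : MvPolynomial σ K, pderiv i u₁ = a ∧ pderiv j u₂ = b ∧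
      pderiv j u₁ + pderiv i u₂ = c ∧ u₁.totalDegree ≤ k + 1 ∧ u₂.totalDegree ≤ k + 1 := by
  set A := antideriv i a
  set B := antideriv j b
  have hA : A.totalDegree ≤ k + 1 := (totalDegree_antideriv_le i a).trans (by omega)
  have hB : B.totalDegree ≤ k + 1 := (totalDegree_antideriv_le j b).trans (by omega)
  set w := c - pderiv j A - pderiv i B with hw_def
  have hw : pderiv i (pderiv j w) = 0 := by
    have hA' : pderiv i (pderiv j (pderiv j A)) = pderiv j (pderiv j a) := by
      rw [pderiv_pderiv_comm i j, pderiv_pderiv_comm i j A, pderiv_antideriv]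
    have hB' : pderiv i (pderiv j (pderiv i B)) = pderiv i (pderiv i b) := by
      rw [pderiv_pderiv_comm j i B, pderiv_antideriv]
    simp only [w, map_sub, hA', hB']
    linear_combination -hcompat
  have hwdeg : w.totalDegree ≤ k := by
    have := totalDegree_pderiv_le j A
    have := totalDegree_pderiv_le i B
    refine (totalDegree_sub _ _).trans (max_le ((totalDegree_sub _ _).trans (max_le hc ?_)) ?_) <;>
      omega
  obtain ⟨f, g, hfg, hf, hg, hfdeg, hgdeg⟩ := exists_add_eq_of_pderiv_pderiv_eq_zero hij hw
  refine ⟨A + antideriv j g, B + antideriv i f, ?_, ?_, ?_, ?_, ?_⟩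
  · rw [map_add, pderiv_antideriv, pderiv_antideriv_of_ne hij, hg, antideriv_zero, add_zero]
  · rw [map_add, pderiv_antideriv, pderiv_antideriv_of_ne hij.symm, hf, antideriv_zero, add_zero]
  · rw [map_add, map_add, pderiv_antideriv, pderiv_antideriv]
    linear_combination hfg + hw_def
  · exact (totalDegree_add _ _).trans (max_le hA ((totalDegree_antideriv_le j g).trans (by omega)))
  · exact (totalDegree_add _ _).trans (max_le hB ((totalDegree_antideriv_le i f).trans (by omega)))

end Field

end MvPolynomial

lemma protRot_of_transpose_eq {τ : Matrix (Fin 2) (Fin 2) P2} (hsym : τᵀ = τ) :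
    protRot τ = pderiv 1 (pderiv 1 (τ 0 0)) + pderiv 0 (pderiv 0 (τ 1 1)) -
      pderiv 0 (pderiv 1 ((2 : ℝ) • τ 0 1)) := by
  have h10 : τ 1 0 = τ 0 1 := congrFun₂ hsym 0 1
  simp only [protRot, prot, h10, map_sub, Derivation.map_smul, pderiv_pderiv_comm 1 0 (τ 0 1)]
  module

lemma pdef_apply (v : Fin 2 → P2) (i j : Fin 2) :
    pdef v i j = (1 / 2 : ℝ) • (pderiv j (v i) + pderiv i (v j)) :=
  rfl

lemma eq_pdef_of_pderiv_eq {τ : Matrix (Fin 2) (Fin 2) P2} (hsym : τᵀ = τ) {v : Fin 2 → P2}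
    (h₀₀ : pderiv 0 (v 0) = τ 0 0) (h₁₁ : pderiv 1 (v 1) = τ 1 1)
    (h₀₁ : pderiv 1 (v 0) + pderiv 0 (v 1) = (2 : ℝ) • τ 0 1) : τ = pdef v := by
  have h10 : τ 1 0 = τ 0 1 := congrFun₂ hsym 0 1
  refine Matrix.ext fun i j => ?_
  rw [pdef_apply]
  fin_cases i <;> fin_cases j <;>
    simp only [Fin.zero_eta, Fin.mk_one, h₀₀, h₁₁, h₀₁, add_comm (pderiv 0 (v 1)), h10] <;>
    module

theorem stmt_19_general (k : ℕ) (τ : Matrix (Fin 2) (Fin 2) P2)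
    (hsym : τᵀ = τ) (hdeg : ∀ i j, (τ i j).totalDegree ≤ k)
    (h : protRot τ = 0) :
    ∃ v : Fin 2 → P2, (∀ i, (v i).totalDegree ≤ k + 1) ∧ τ = pdef v := by
  have hcompat := sub_eq_zero.mp ((protRot_of_transpose_eq hsym).symm.trans h)
  obtain ⟨u₀, u₁, h₀₀, h₁₁, h₀₁, hu₀, hu₁⟩ :=
    exists_pderiv_eq_of_pderiv_pderiv_eq (i := 0) (j := 1) (by decide) (hdeg 0 0) (hdeg 1 1)
      ((totalDegree_smul_le _ _).trans (hdeg 0 1)) hcompat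
  exact ⟨![u₀, u₁], Fin.forall_fin_two.mpr ⟨hu₀, hu₁⟩, eq_pdef_of_pderiv_eq hsym h₀₀ h₁₁ h₀₁⟩

/-- A symmetric polynomial matrix of degree ≤ k with `rot rot τ = 0` is the
symmetric gradient of a polynomial vector field of degree ≤ k+1. -/
theorem stmt_19 (k : ℕ) (hk : 2 ≤ k) (τ : Matrix (Fin 2) (Fin 2) P2)
    (hsym : τᵀ = τ) (hdeg : ∀ i j, (τ i j).totalDegree ≤ k)
    (h : protRot τ = 0) :
    ∃ v : Fin 2 → P2, (∀ i, (v i).totalDegree ≤ k + 1) ∧ τ = pdef v :=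
  stmt_19_general k τ hsym hdeg h
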